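/- (Abelian property) Consider the unfair divisible sandpile started from an initial configuration ν₀ with finite total mass and bounded support, and let S and T be two legal toppling schemes for ν₀. Then the limiting final configurations coincide, ν^S = ν^T, and the limiting odometer functions coincide, u^S = u^T. -/
import Mathlib


open MeasureTheory Filter Real
open scoped Classical

noncomputable section

/-- The lattice ℤ^d, viewed as ℤ^{d-1} (space) × ℤ (drift direction). -/
abbrev LatZ (d : ℕ) := (Fin (d-1) → ℤ) × ℤ

/-- The fraction of toppled mass sent from `x` to `y`:
`p` to `x + e_d`, `(1-p)/(2(d-1))` to each `x ± e_i`, `0` otherwise. -/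
def nbrWeight (d : ℕ) (p : ℝ) (x y : LatZ d) : ℝ :=
  (if y = (x.1, x.2 + 1) then p else 0) +
  ((1 - p) / (2 * ((d : ℝ) - 1))) *
    ∑ i : Fin (d-1),
      ((if y = (Function.update x.1 i (x.1 i + 1), x.2) then (1:ℝ) else 0) +
       (if y = (Function.update x.1 i (x.1 i - 1), x.2) then (1:ℝ) else 0))

/-- Toppling a site: a full site keeps mass 1 and distributes the excess to its
neighbors according to `nbrWeight`; toppling a non-full site does nothing. -/
def topple (d : ℕ) (p : ℝ) (ν : LatZ d → ℝ) (x : LatZ d) : LatZ d → ℝ :=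
  if 1 ≤ ν x then
    fun y => (if y = x then 1 else ν y) + (ν x - 1) * nbrWeight d p x y
  else ν

/-- The configuration after the first `k` topplings of the scheme `T`. -/
def config (d : ℕ) (p : ℝ) (ν₀ : LatZ d → ℝ) (T : ℕ → LatZ d) : ℕ → LatZ d → ℝ
  | 0 => ν₀
  | k + 1 => topple d p (config d p ν₀ T k) (T k)

/-- Mass emitted from a site `x` when it is toppled in configuration `ν`. -/
def emitted (d : ℕ) (ν : LatZ d → ℝ) (x : LatZ d) : ℝ := if 1 ≤ ν x then ν x - 1 else 0

/-- The odometer after `k` topplings: total mass emitted from `x` so far. -/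
def odom (d : ℕ) (p : ℝ) (ν₀ : LatZ d → ℝ) (T : ℕ → LatZ d) (k : ℕ) (x : LatZ d) : ℝ :=
  ∑ j ∈ Finset.range k, if T j = x then emitted d (config d p ν₀ T j) x else 0

/-- A toppling scheme: every site that is full at some stage occurs infinitely often
afterwards in the sequence. -/
def IsScheme (d : ℕ) (p : ℝ) (ν₀ : LatZ d → ℝ) (T : ℕ → LatZ d) : Prop :=
  ∀ k x, 1 ≤ config d p ν₀ T k x → ∀ m, ∃ j, m ≤ j ∧ T j = x

/-- A legal scheme only topples full sites. -/
def IsLegal (d : ℕ) (p : ℝ) (ν₀ : LatZ d → ℝ) (T : ℕ → LatZ d) : Prop :=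
  ∀ k, 1 ≤ config d p ν₀ T k (T k)

/-- The discrete heat operator 𝒦. -/
def Kop (d : ℕ) (p : ℝ) (f : LatZ d → ℝ) (x : LatZ d) : ℝ :=
  ((1 - p) / (2 * ((d : ℝ) - 1))) *
    ∑ i : Fin (d-1),
      ((f (Function.update x.1 i (x.1 i + 1), x.2) - f x) +
       (f (Function.update x.1 i (x.1 i - 1), x.2) - f x))
  - p * (f x - f (x.1, x.2 - 1))

end

noncomputable section AuxAbelian

/-- Total mass flowing into `x` if each site `y` emits `u y`. -/
def inflow (d : ℕ) (p : ℝ) (u : LatZ d → ℝ) (x : LatZ d) : ℝ :=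
  p * u (x.1, x.2 - 1) +
  ((1 - p) / (2 * ((d : ℝ) - 1))) *
    ∑ i : Fin (d-1),
      (u (Function.update x.1 i (x.1 i + 1), x.2) +
       u (Function.update x.1 i (x.1 i - 1), x.2))

lemma update_add_eq_iff {n : ℕ} (a b : Fin n → ℤ) (i : Fin n) :
    Function.update a i (a i + 1) = b ↔ a = Function.update b i (b i - 1) := by
  constructor
  · rintro rfl
    funext j
    by_cases h : j = i <;> simp [Function.update, h]
  · rintro rfl
    funext j
    by_cases h : j = i <;> simp [Function.update, h]

lemma update_sub_eq_iff {n : ℕ} (a b : Fin n → ℤ) (i : Fin n) :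
    Function.update a i (a i - 1) = b ↔ a = Function.update b i (b i + 1) := by
  constructor
  · rintro rfl
    funext j
    by_cases h : j = i <;> simp [Function.update, h]
  · rintro rfl
    funext j
    by_cases h : j = i <;> simp [Function.update, h]

lemma inflow_delta {d : ℕ} {p : ℝ} (z x : LatZ d) :
    inflow d p (fun y => if y = z then 1 else 0) x = nbrWeight d p z x := by
  unfold inflow nbrWeight
  have h1 : ((x.1, x.2 - 1) = z) ↔ (x = (z.1, z.2 + 1)) := by
    rcases x with ⟨x1, x2⟩; rcases z with ⟨z1, z2⟩
    simp only [Prod.ext_iff]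
    constructor <;> rintro ⟨ha, hb⟩ <;> exact ⟨ha, by omega⟩
  have e1 : p * (if (x.1, x.2 - 1) = z then (1:ℝ) else 0)
      = (if x = (z.1, z.2 + 1) then p else 0) := by
    rw [if_congr h1 rfl rfl]; split <;> simp
  have e2 : ∀ i : Fin (d-1),
      ((if (Function.update x.1 i (x.1 i + 1), x.2) = z then (1:ℝ) else 0) +
       (if (Function.update x.1 i (x.1 i - 1), x.2) = z then (1:ℝ) else 0))
      = ((if x = (Function.update z.1 i (z.1 i + 1), z.2) then (1:ℝ) else 0) +
         (if x = (Function.update z.1 i (z.1 i - 1), z.2) then (1:ℝ) else 0)) := by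
    intro i
    have hup : ((Function.update x.1 i (x.1 i + 1), x.2) = z)
        ↔ (x = (Function.update z.1 i (z.1 i - 1), z.2)) := by
      rcases x with ⟨x1, x2⟩; rcases z with ⟨z1, z2⟩
      simp only [Prod.ext_iff]
      exact and_congr (update_add_eq_iff x1 z1 i) Iff.rfl
    have hdown : ((Function.update x.1 i (x.1 i - 1), x.2) = z)
        ↔ (x = (Function.update z.1 i (z.1 i + 1), z.2)) := by
      rcases x with ⟨x1, x2⟩; rcases z with ⟨z1, z2⟩
      simp only [Prod.ext_iff]
      exact and_congr (update_sub_eq_iff x1 z1 i) Iff.rfl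
    rw [if_congr hup rfl rfl, if_congr hdown rfl rfl, add_comm]
  rw [e1, Finset.sum_congr rfl (fun i _ => e2 i)]

lemma inflow_add {d : ℕ} {p : ℝ} (u v : LatZ d → ℝ) (x : LatZ d) :
    inflow d p (fun y => u y + v y) x = inflow d p u x + inflow d p v x := by
  unfold inflow
  rw [show (∑ i : Fin (d-1),
      ((u (Function.update x.1 i (x.1 i + 1), x.2) + v (Function.update x.1 i (x.1 i + 1), x.2)) +
       (u (Function.update x.1 i (x.1 i - 1), x.2) + v (Function.update x.1 i (x.1 i - 1), x.2))))
      = (∑ i : Fin (d-1),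
      ((u (Function.update x.1 i (x.1 i + 1), x.2) + u (Function.update x.1 i (x.1 i - 1), x.2)) +
       (v (Function.update x.1 i (x.1 i + 1), x.2) + v (Function.update x.1 i (x.1 i - 1), x.2))))
      from Finset.sum_congr rfl (fun i _ => by ring), Finset.sum_add_distrib]
  ring

lemma inflow_smul {d : ℕ} {p : ℝ} (c : ℝ) (u : LatZ d → ℝ) (x : LatZ d) :
    inflow d p (fun y => c * u y) x = c * inflow d p u x := by
  unfold inflow
  rw [show (∑ i : Fin (d-1),
      (c * u (Function.update x.1 i (x.1 i + 1), x.2) +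
       c * u (Function.update x.1 i (x.1 i - 1), x.2)))
      = c * (∑ i : Fin (d-1),
      (u (Function.update x.1 i (x.1 i + 1), x.2) +
       u (Function.update x.1 i (x.1 i - 1), x.2)))
      from by rw [Finset.mul_sum]; exact Finset.sum_congr rfl (fun i _ => by ring)]
  ring

lemma inflow_mono {d : ℕ} {p : ℝ} (hp0 : 0 ≤ p)
    (hc0 : 0 ≤ (1 - p) / (2 * ((d : ℝ) - 1)))
    {u v : LatZ d → ℝ} (h : ∀ y, u y ≤ v y) (x : LatZ d) :
    inflow d p u x ≤ inflow d p v x := by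
  unfold inflow
  gcongr
  · exact h _
  · exact h _
  · exact h _

lemma emitted_nonneg {d : ℕ} (ν : LatZ d → ℝ) (x : LatZ d) : 0 ≤ emitted d ν x := by
  unfold emitted; split <;> linarith

lemma odom_succ (d : ℕ) (p : ℝ) (ν₀ : LatZ d → ℝ) (T : ℕ → LatZ d) (k : ℕ) :
    ∀ y, odom d p ν₀ T (k+1) y = odom d p ν₀ T k y +
      emitted d (config d p ν₀ T k) (T k) * (if y = T k then 1 else 0) := by
  intro y
  unfold odom
  rw [Finset.sum_range_succ]
  by_cases h : T k = y
  · rw [if_pos h, if_pos h.symm, h]; ring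
  · rw [if_neg h, if_neg (fun hy => h hy.symm)]; ring

/-- Mass balance: configuration = initial + inflow − outflow. -/
lemma config_eq (d : ℕ) (p : ℝ) (ν₀ : LatZ d → ℝ) (T : ℕ → LatZ d) :
    ∀ k x, config d p ν₀ T k x
      = ν₀ x + inflow d p (odom d p ν₀ T k) x - odom d p ν₀ T k x := by
  intro k
  induction k with
  | zero =>
    intro x
    simp [config, odom, inflow]
  | succ k ih =>
    intro x
    have hod := odom_succ d p ν₀ T k
    have hfun : odom d p ν₀ T (k+1) = fun y => odom d p ν₀ T k y +
        emitted d (config d p ν₀ T k) (T k) * (if y = T k then 1 else 0) := funext hod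
    have hinf : inflow d p (odom d p ν₀ T (k+1)) x
        = inflow d p (odom d p ν₀ T k) x
          + emitted d (config d p ν₀ T k) (T k) * nbrWeight d p (T k) x := by
      rw [hfun, inflow_add, inflow_smul, inflow_delta]
    show topple d p (config d p ν₀ T k) (T k) x = _
    rw [hinf, hod x]
    unfold topple
    by_cases h1 : 1 ≤ config d p ν₀ T k (T k)
    · rw [if_pos h1]
      have he : emitted d (config d p ν₀ T k) (T k) = config d p ν₀ T k (T k) - 1 := by
        unfold emitted; rw [if_pos h1]
      rw [he]
      by_cases h2 : x = T k
      · rw [if_pos h2, if_pos h2]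
        have ihx := ih x
        rw [h2] at ihx ⊢
        linarith [ihx]
      · rw [if_neg h2, if_neg h2]
        have ihx := ih x
        linarith [ihx]
    · rw [if_neg h1]
      have he : emitted d (config d p ν₀ T k) (T k) = 0 := by
        unfold emitted; rw [if_neg h1]
      rw [he]
      have ihx := ih x
      by_cases h2 : x = T k
      · rw [if_pos h2]; linarith [ihx]
      · rw [if_neg h2]; linarith [ihx]

lemma odom_mono (d : ℕ) (p : ℝ) (ν₀ : LatZ d → ℝ) (T : ℕ → LatZ d) (x : LatZ d) :
    Monotone (fun k => odom d p ν₀ T k x) := by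
  apply monotone_nat_of_le_succ
  intro k
  rw [odom_succ]
  have := emitted_nonneg (config d p ν₀ T k) (T k)
  by_cases h : x = T k <;> simp [h] <;> linarith

lemma odom_le_limit {d : ℕ} {p : ℝ} {ν₀ : LatZ d → ℝ} {T : ℕ → LatZ d} {u : LatZ d → ℝ}
    (hu : ∀ x, Filter.Tendsto (fun k => odom d p ν₀ T k x) Filter.atTop (nhds (u x)))
    (k : ℕ) (x : LatZ d) : odom d p ν₀ T k x ≤ u x :=
  ge_of_tendsto (hu x) (Filter.eventually_atTop.2 ⟨k, fun _ hj => odom_mono d p ν₀ T x hj⟩)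

lemma nbrWeight_self (d : ℕ) (p : ℝ) (x : LatZ d) : nbrWeight d p x x = 0 := by
  unfold nbrWeight
  have h1 : ¬ (x = (x.1, x.2 + 1)) := by
    intro h
    have := congrArg Prod.snd h
    simp at this
  have h2 : ∀ i : Fin (d-1), ¬ (x = (Function.update x.1 i (x.1 i + 1), x.2)) := by
    intro i h
    have h' : x.1 i = x.1 i + 1 := by
      simpa using congrFun (congrArg Prod.fst h) i
    omega
  have h3 : ∀ i : Fin (d-1), ¬ (x = (Function.update x.1 i (x.1 i - 1), x.2)) := by
    intro i h
    have h' : x.1 i = x.1 i - 1 := by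
      simpa using congrFun (congrArg Prod.fst h) i
    omega
  rw [if_neg h1, Finset.sum_eq_zero (fun i _ => by rw [if_neg (h2 i), if_neg (h3 i)]; ring)]
  ring

lemma config_after_topple {d : ℕ} {p : ℝ} {ν₀ : LatZ d → ℝ} {T : ℕ → LatZ d} {j : ℕ} {x : LatZ d}
    (h : T j = x) (hfull : 1 ≤ config d p ν₀ T j x) :
    config d p ν₀ T (j+1) x = 1 := by
  show topple d p (config d p ν₀ T j) (T j) x = 1
  rw [h]
  unfold topple
  rw [if_pos hfull]
  simp [nbrWeight_self]

/-- The limiting configuration of a scheme is at most 1 everywhere. -/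
lemma limit_config_le_one {d : ℕ} {p : ℝ} {ν₀ : LatZ d → ℝ} {T : ℕ → LatZ d}
    (hT : IsScheme d p ν₀ T) {ν : LatZ d → ℝ}
    (hν : ∀ x, Filter.Tendsto (fun k => config d p ν₀ T k x) Filter.atTop (nhds (ν x)))
    (x : LatZ d) : ν x ≤ 1 := by
  by_contra hcon
  push_neg at hcon
  have hev : ∀ᶠ k in Filter.atTop, 1 < config d p ν₀ T k x :=
    (hν x).eventually (eventually_gt_nhds hcon)
  obtain ⟨K, hK⟩ := Filter.eventually_atTop.1 hev
  obtain ⟨j, hjK, hjx⟩ := hT K x (le_of_lt (hK K le_rfl)) K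
  have h1 : config d p ν₀ T (j+1) x = 1 :=
    config_after_topple hjx (le_of_lt (hK j hjK))
  have h2 : 1 < config d p ν₀ T (j+1) x := hK (j+1) (by omega)
  linarith

/-- The limiting configuration satisfies the mass-balance identity. -/
lemma limit_identity {d : ℕ} {p : ℝ} {ν₀ : LatZ d → ℝ} {T : ℕ → LatZ d}
    {u ν : LatZ d → ℝ}
    (hu : ∀ x, Filter.Tendsto (fun k => odom d p ν₀ T k x) Filter.atTop (nhds (u x)))
    (hν : ∀ x, Filter.Tendsto (fun k => config d p ν₀ T k x) Filter.atTop (nhds (ν x)))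
    (x : LatZ d) : ν x = ν₀ x + inflow d p u x - u x := by
  have hinf : Filter.Tendsto (fun k => inflow d p (odom d p ν₀ T k) x) Filter.atTop
      (nhds (inflow d p u x)) := by
    unfold inflow
    exact ((tendsto_const_nhds.mul (hu _)).add
      (tendsto_const_nhds.mul (tendsto_finset_sum _ fun i _ => (hu _).add (hu _))))
  have h2 : Filter.Tendsto (fun k => config d p ν₀ T k x) Filter.atTop
      (nhds (ν₀ x + inflow d p u x - u x)) := by
    have hca : Filter.Tendsto (fun _ : ℕ => ν₀ x) Filter.atTop (nhds (ν₀ x)) :=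
      tendsto_const_nhds
    exact ((hca.add hinf).sub (hu x)).congr (fun k => (config_eq d p ν₀ T k x).symm)
  exact tendsto_nhds_unique (hν x) h2

/-- Least action principle: a legal scheme's odometer is bounded by any
function `u` with `ν₀ + inflow u − 1 ≤ u` and `u ≥ 0`. -/
lemma least_action {d : ℕ} {p : ℝ} (hp0 : 0 ≤ p)
    (hc0 : 0 ≤ (1 - p) / (2 * ((d : ℝ) - 1)))
    {ν₀ : LatZ d → ℝ} {S : ℕ → LatZ d} (hSleg : IsLegal d p ν₀ S)
    {u : LatZ d → ℝ} (hu0 : ∀ x, 0 ≤ u x)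
    (hq : ∀ x, ν₀ x + inflow d p u x - 1 ≤ u x) :
    ∀ k x, odom d p ν₀ S k x ≤ u x := by
  intro k
  induction k with
  | zero => intro x; simpa [odom] using hu0 x
  | succ k ih =>
    intro x
    rw [odom_succ]
    by_cases h : x = S k
    · rw [if_pos h]
      have hfull := hSleg k
      have he : emitted d (config d p ν₀ S k) (S k) = config d p ν₀ S k (S k) - 1 := by
        unfold emitted; rw [if_pos hfull]
      have hc := config_eq d p ν₀ S k (S k)
      have hmono : inflow d p (odom d p ν₀ S k) (S k) ≤ inflow d p u (S k) :=
        inflow_mono hp0 hc0 ih (S k)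
      have hqz := hq (S k)
      rw [h]
      rw [he, hc]
      ring_nf
      linarith
    · rw [if_neg h]
      have := ih x
      linarith

end AuxAbelian

theorem unfair_divisible_sandpile_abelian
    (d : ℕ) (hd : 2 ≤ d) (p : ℝ) (hp : p ∈ Set.Ioo (0:ℝ) 1)
    (ν₀ : LatZ d → ℝ) (h0 : ∀ x, 0 ≤ ν₀ x) (hsupp : (Function.support ν₀).Finite)
    (S T : ℕ → LatZ d)
    (hS : IsScheme d p ν₀ S) (hSleg : IsLegal d p ν₀ S)
    (hT : IsScheme d p ν₀ T) (hTleg : IsLegal d p ν₀ T)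
    (uS νS uT νT : LatZ d → ℝ)
    (huS : ∀ x, Tendsto (fun k => odom d p ν₀ S k x) atTop (nhds (uS x)))
    (hνS : ∀ x, Tendsto (fun k => config d p ν₀ S k x) atTop (nhds (νS x)))
    (huT : ∀ x, Tendsto (fun k => odom d p ν₀ T k x) atTop (nhds (uT x)))
    (hνT : ∀ x, Tendsto (fun k => config d p ν₀ T k x) atTop (nhds (νT x))) :
    νS = νT ∧ uS = uT := by
  have hp0 : 0 ≤ p := le_of_lt hp.1
  have hd2 : (2:ℝ) ≤ (d:ℝ) := by exact_mod_cast hd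
  have hc0 : 0 ≤ (1 - p) / (2 * ((d : ℝ) - 1)) := by
    apply div_nonneg <;> linarith [hp.2]
  -- limit identities
  have hidS : ∀ x, νS x = ν₀ x + inflow d p uS x - uS x := limit_identity huS hνS
  have hidT : ∀ x, νT x = ν₀ x + inflow d p uT x - uT x := limit_identity huT hνT
  -- limit configs are ≤ 1
  have hleS : ∀ x, νS x ≤ 1 := limit_config_le_one hS hνS
  have hleT : ∀ x, νT x ≤ 1 := limit_config_le_one hT hνT
  -- nonnegativity of limit odometers
  have hu0S : ∀ x, 0 ≤ uS x := fun x => by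
    have := odom_le_limit huS 0 x
    simpa [odom] using this
  have hu0T : ∀ x, 0 ≤ uT x := fun x => by
    have := odom_le_limit huT 0 x
    simpa [odom] using this
  -- least action bounds
  have hqS : ∀ x, ν₀ x + inflow d p uS x - 1 ≤ uS x := fun x => by
    have := hidS x; have := hleS x; linarith
  have hqT : ∀ x, ν₀ x + inflow d p uT x - 1 ≤ uT x := fun x => by
    have := hidT x; have := hleT x; linarith
  have hST : ∀ k x, odom d p ν₀ S k x ≤ uT x := least_action hp0 hc0 hSleg hu0T hqT
  have hTS : ∀ k x, odom d p ν₀ T k x ≤ uS x := least_action hp0 hc0 hTleg hu0S hqS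
  have huEq : uS = uT := by
    funext x
    apply le_antisymm
    · exact le_of_tendsto (huS x) (Filter.Eventually.of_forall (fun k => hST k x))
    · exact le_of_tendsto (huT x) (Filter.Eventually.of_forall (fun k => hTS k x))
  constructor
  · funext x
    rw [hidS x, hidT x, huEq]
  · exact huEq
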